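/- Axiom P (alive(U) ∧ dead(U^c) ∧ φ ⇒ D_U (dead(U^c) ⇒ φ)) is valid in every proper generalized epistemic model; conversely, in the canonical model of EC_n + P, if live(Γ) = live(Δ) = U and Γ ∼_U Δ, then Γ = Δ. -/

import Mathlib

/-- Formulas of epistemic logic with distributed knowledge:
atomic propositions, falsum, implication, and `D U φ` for groups `U` of agents. -/
inductive Fml (A : Type) : Type
  | atom : ℕ → Fml A
  | fls : Fml A
  | imp : Fml A → Fml A → Fml A
  | D : Finset A → Fml A → Fml A

namespace Fml
variable {A : Type}
/-- Negation. -/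
def neg (φ : Fml A) : Fml A := imp φ fls
/-- Truth. -/
def tru : Fml A := neg (fls (A := A))
/-- Conjunction. -/
def and (φ ψ : Fml A) : Fml A := neg (imp φ (neg ψ))
/-- `alive U := ¬ D_U ¬⊤`. -/
def alive (U : Finset A) : Fml A := neg (D U (neg tru))
/-- `dead a := K_a ⊥`. -/
def dead (a : A) : Fml A := D {a} fls
end Fml

/-- Propositional tautologies: formulas true under every valuation that
interprets `imp` and `fls` classically (atoms and `D`-formulas arbitrary). -/
def Taut {A : Type} (φ : Fml A) : Prop :=
  ∀ v : Fml A → Prop,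
    (∀ ψ χ : Fml A, v (Fml.imp ψ χ) ↔ (v ψ → v χ)) → ¬ v Fml.fls → v φ

/-- The Hilbert system EC_n extended with an extra set `Ax` of axioms. -/
inductive ProvE {A : Type} [DecidableEq A] (Ax : Set (Fml A)) : Fml A → Prop
  | taut {φ : Fml A} : Taut φ → ProvE Ax φ
  | extra {φ : Fml A} : φ ∈ Ax → ProvE Ax φ
  | mp {φ ψ : Fml A} : ProvE Ax (Fml.imp φ ψ) → ProvE Ax φ → ProvE Ax ψ
  | nec (U : Finset A) {φ : Fml A} : ProvE Ax φ → ProvE Ax (Fml.D U φ)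
  | axK (U : Finset A) (φ ψ : Fml A) :
      ProvE Ax (Fml.imp (Fml.D U (Fml.imp φ ψ)) (Fml.imp (Fml.D U φ) (Fml.D U ψ)))
  | ax4 (U : Finset A) (φ : Fml A) :
      ProvE Ax (Fml.imp (Fml.D U φ) (Fml.D U (Fml.D U φ)))
  | axB (U : Finset A) (φ : Fml A) :
      ProvE Ax (Fml.imp φ (Fml.D U (Fml.neg (Fml.D U (Fml.neg φ)))))
  | axMono {U U' : Finset A} (φ : Fml A) :
      U ⊆ U' → ProvE Ax (Fml.imp (Fml.D U φ) (Fml.D U' φ))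
  | axUnion (U U' : Finset A) :
      ProvE Ax (Fml.imp (Fml.and (Fml.alive U) (Fml.alive U')) (Fml.alive (U ∪ U')))

variable {A : Type} [DecidableEq A]

/-- Consistency with respect to the extended system. -/
def ConSetE (Ax : Set (Fml A)) (Γ : Set (Fml A)) : Prop :=
  ¬ ∃ l : List (Fml A), (∀ ψ ∈ l, ψ ∈ Γ) ∧
      ProvE Ax (Fml.imp (l.foldr Fml.and Fml.tru) Fml.fls)

/-- Maximal consistent sets with respect to the extended system. -/
def MCSE (Ax : Set (Fml A)) (Γ : Set (Fml A)) : Prop :=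
  ConSetE Ax Γ ∧ ∀ φ : Fml A, φ ∉ Γ → ¬ ConSetE Ax (insert φ Γ)

/-- The canonical accessibility relation: `Γ ∼_U Δ` iff `D_U φ ∈ Γ` implies `φ ∈ Δ`. -/
def canRel (U : Finset A) (Γ Δ : Set (Fml A)) : Prop :=
  ∀ φ : Fml A, Fml.D U φ ∈ Γ → φ ∈ Δ

/-- A generalized epistemic model: worlds, a PER `rel U` for each group `U`,
monotone in `U`, closed under union of alive groups, and a valuation. -/
structure GEM (A : Type) [DecidableEq A] where
  W : Type
  rel : Finset A → W → W → Prop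
  symm : ∀ U w w', rel U w w' → rel U w' w
  trans : ∀ U w₁ w₂ w₃, rel U w₁ w₂ → rel U w₂ w₃ → rel U w₁ w₃
  mono : ∀ (U U' : Finset A), U ⊆ U' → ∀ w w', rel U' w w' → rel U w w'
  union : ∀ (U U' : Finset A) w, rel U w w → rel U' w w → rel (U ∪ U') w w
  val : W → ℕ → Prop

/-- The satisfaction relation `M, w ⊨ φ`. -/
def Sat {A : Type} [DecidableEq A] (M : GEM A) : M.W → Fml A → Prop
  | w, Fml.atom p => M.val w p
  | _, Fml.fls => False
  | w, Fml.imp φ ψ => Sat M w φ → Sat M w ψ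
  | w, Fml.D U φ => ∀ w', M.rel U w w' → Sat M w' φ

attribute [local instance] Classical.propDecidable

/-- `dead V := ⋀_{a ∈ V} K_a ⊥`. -/
noncomputable def deadG {A : Type} (V : Finset A) : Fml A :=
  (V.toList.map fun a => Fml.D {a} Fml.fls).foldr Fml.and Fml.tru

variable {A : Type} [DecidableEq A] [Fintype A]

/-- The set of alive agents of a world: those `a` with `w ∼_{{a}} w`
(which, by union closure and monotonicity, is the maximal `U` with `w ∼_U w`). -/
noncomputable def liveF (M : GEM A) (w : M.W) : Finset A :=
  Finset.univ.filter fun a => M.rel {a} w w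

/-- The set of alive agents of a maximal consistent set in the canonical model. -/
noncomputable def liveC (Γ : Set (Fml A)) : Finset A :=
  Finset.univ.filter fun a => canRel {a} Γ Γ

/-- All instances of axiom P: `alive U ∧ dead Uᶜ ∧ φ ⇒ D_U (dead Uᶜ ⇒ φ)`. -/
def AxP : Set (Fml A) :=
  {χ | ∃ (U : Finset A) (φ : Fml A),
    χ = Fml.imp (Fml.and (Fml.alive U) (Fml.and (deadG Uᶜ) φ))
          (Fml.D U (Fml.imp (deadG Uᶜ) φ))}

/-!
Soundness: if `alive U ∧ dead Uᶜ` holds at `w`, then `w ∼_U w` and the alive agents of `w` are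
exactly `U`; the same holds at every `w' ∼_U w` satisfying `dead Uᶜ`, so properness forces
`w' = w`, where `φ` holds.

Canonical model: if `Γ ≁_{a} Γ`, axioms B and 4 turn a witness `D_a φ ∈ Γ`, `φ ∉ Γ` into
`D_a ⊥ ∈ Γ`, so a maximal consistent set with live set `U` contains `dead Uᶜ`. When `Γ ∼_U Δ`,
also `alive U ∈ Γ`, and axiom P carries each `φ ∈ Γ` to `dead Uᶜ ⇒ φ ∈ Δ`, hence to `Δ`.
Thus `Γ ⊆ Δ`, and maximality gives `Γ = Δ`.
-/

section Valuation

variable {A : Type} {v : Fml A → Prop}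

theorem val_foldr_and_iff (hv : ∀ ψ χ : Fml A, v (Fml.imp ψ χ) ↔ (v ψ → v χ))
    (hf : ¬ v Fml.fls) (l : List (Fml A)) :
    v (l.foldr Fml.and Fml.tru) ↔ ∀ x ∈ l, v x := by
  induction l with
  | nil => simp [Fml.tru, Fml.neg, hv]
  | cons x l ih =>
    simp only [List.foldr_cons, Fml.and, Fml.neg, hv, ih, List.forall_mem_cons]
    tauto

end Valuation

section Hilbert

variable {A : Type} [DecidableEq A] {Ax : Set (Fml A)} {U : Finset A} {φ ψ χ : Fml A}

namespace ProvE

theorem mp₂ (ht : Taut (Fml.imp φ (Fml.imp ψ χ))) (h₁ : ProvE Ax φ) (h₂ : ProvE Ax ψ) :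
    ProvE Ax χ :=
  mp (mp (taut ht) h₁) h₂

theorem D_imp_D (h : ProvE Ax (Fml.imp φ ψ)) : ProvE Ax (Fml.imp (Fml.D U φ) (Fml.D U ψ)) :=
  mp (axK U φ ψ) (nec U h)

end ProvE

namespace MCSE

variable {Γ Δ : Set (Fml A)}

theorem exists_foldr_and_imp_neg (hΓ : MCSE Ax Γ) (hψ : ψ ∉ Γ) :
    ∃ l : List (Fml A), (∀ x ∈ l, x ∈ Γ) ∧
      ProvE Ax (Fml.imp (l.foldr Fml.and Fml.tru) (Fml.neg ψ)) := by
  obtain ⟨l, hl, hp⟩ := not_not.mp (hΓ.2 ψ hψ)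
  refine ⟨l.filter (· ≠ ψ), fun x hx => ?_, ProvE.mp (ProvE.taut fun v hv hf => ?_) hp⟩
  · rw [List.mem_filter, decide_eq_true_iff] at hx
    exact (hl x hx.1).resolve_left hx.2
  · simp only [hv, Fml.neg, val_foldr_and_iff hv hf, List.mem_filter, decide_eq_true_iff]
    intro hl hm hψ
    exact hl fun x hx => (em (x = ψ)).elim (· ▸ hψ) fun hne => hm x ⟨hx, hne⟩

theorem mem_of_prov_foldr_and_imp (hΓ : MCSE Ax Γ) {l : List (Fml A)} (hl : ∀ x ∈ l, x ∈ Γ)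
    (hp : ProvE Ax (Fml.imp (l.foldr Fml.and Fml.tru) ψ)) : ψ ∈ Γ := by
  by_contra hψ
  obtain ⟨m, hm, hpm⟩ := hΓ.exists_foldr_and_imp_neg hψ
  refine hΓ.1 ⟨l ++ m, fun x hx => (List.mem_append.mp hx).elim (hl x) (hm x),
    ProvE.mp₂ (fun v hv hf => ?_) hp hpm⟩
  simp only [hv, Fml.neg, val_foldr_and_iff hv hf, List.forall_mem_append]
  tauto

theorem mem_of_prov (hΓ : MCSE Ax Γ) (h : ProvE Ax ψ) : ψ ∈ Γ :=
  hΓ.mem_of_prov_foldr_and_imp (l := []) (by simp)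
    (ProvE.mp (ProvE.taut fun v hv _ => by simp only [hv]; exact fun h _ => h) h)

theorem mem_of_imp_mem (hΓ : MCSE Ax Γ) (h : Fml.imp φ ψ ∈ Γ) (hφ : φ ∈ Γ) : ψ ∈ Γ := by
  refine hΓ.mem_of_prov_foldr_and_imp (l := [Fml.imp φ ψ, φ]) (by simp [h, hφ])
    (ProvE.taut fun v hv hf => ?_)
  simp only [hv, val_foldr_and_iff hv hf, List.forall_mem_cons]
  tauto

theorem and_mem (hΓ : MCSE Ax Γ) (hφ : φ ∈ Γ) (hψ : ψ ∈ Γ) : Fml.and φ ψ ∈ Γ := by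
  refine hΓ.mem_of_prov_foldr_and_imp (l := [φ, ψ]) (by simp [hφ, hψ])
    (ProvE.taut fun v hv hf => ?_)
  simp only [hv, Fml.and, Fml.neg, val_foldr_and_iff hv hf, List.forall_mem_cons]
  tauto

theorem foldr_and_mem (hΓ : MCSE Ax Γ) {l : List (Fml A)} (hl : ∀ x ∈ l, x ∈ Γ) :
    l.foldr Fml.and Fml.tru ∈ Γ :=
  hΓ.mem_of_prov_foldr_and_imp hl (ProvE.taut fun _ hv _ => (hv _ _).mpr id)

theorem fls_not_mem (hΓ : MCSE Ax Γ) : Fml.fls ∉ Γ := fun h =>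
  hΓ.1 ⟨[Fml.fls], by simpa using h,
    ProvE.taut fun v hv hf => by simp only [hv, val_foldr_and_iff hv hf]; simp⟩

theorem neg_mem_iff (hΓ : MCSE Ax Γ) : Fml.neg φ ∈ Γ ↔ φ ∉ Γ := by
  refine ⟨fun hn hφ => hΓ.fls_not_mem (hΓ.mem_of_imp_mem hn hφ), fun hφ => ?_⟩
  obtain ⟨l, hl, hp⟩ := hΓ.exists_foldr_and_imp_neg hφ
  exact hΓ.mem_of_prov_foldr_and_imp hl hp

theorem D_mem_of_prov_imp (hΓ : MCSE Ax Γ) (h : ProvE Ax (Fml.imp φ ψ))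
    (hφ : Fml.D U φ ∈ Γ) : Fml.D U ψ ∈ Γ :=
  hΓ.mem_of_imp_mem (hΓ.mem_of_prov (ProvE.D_imp_D h)) hφ

theorem D_fls_mem_of_not_canRel_self (hΓ : MCSE Ax Γ) (h : ¬ canRel U Γ Γ) :
    Fml.D U Fml.fls ∈ Γ := by
  obtain ⟨φ, hDφ, hφ⟩ : ∃ φ, Fml.D U φ ∈ Γ ∧ φ ∉ Γ := by simpa [canRel] using h
  set p := Fml.D U (Fml.neg (Fml.neg φ))
  -- axiom B at `¬φ` gives `D_U ¬p`, while axioms 4 and K give `D_U p`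
  have hB : Fml.D U (Fml.neg p) ∈ Γ :=
    hΓ.mem_of_imp_mem (hΓ.mem_of_prov (ProvE.axB U (Fml.neg φ))) (hΓ.neg_mem_iff.mpr hφ)
  have h4 : Fml.D U p ∈ Γ :=
    hΓ.D_mem_of_prov_imp
      (ProvE.D_imp_D (ProvE.taut fun _ hv _ => by simp only [Fml.neg, hv]; tauto))
      (hΓ.mem_of_imp_mem (hΓ.mem_of_prov (ProvE.ax4 U φ)) hDφ)
  have hp : Fml.D U (Fml.imp (Fml.neg p) Fml.fls) ∈ Γ :=
    hΓ.D_mem_of_prov_imp (ProvE.taut fun _ hv _ => by simp only [Fml.neg, hv]; tauto) h4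
  exact hΓ.mem_of_imp_mem (hΓ.mem_of_imp_mem (hΓ.mem_of_prov (ProvE.axK U _ _)) hp) hB

theorem alive_mem_of_canRel (hΓ : MCSE Ax Γ) (hΔ : MCSE Ax Δ) (h : canRel U Γ Δ) :
    Fml.alive U ∈ Γ := by
  refine hΓ.neg_mem_iff.mpr fun hD => (hΔ.neg_mem_iff.mp (h _ hD)) (hΔ.mem_of_prov ?_)
  exact ProvE.taut fun v hv _ => by simp only [Fml.tru, Fml.neg, hv]; exact id

theorem eq_of_subset (hΓ : MCSE Ax Γ) (hΔ : MCSE Ax Δ) (h : Γ ⊆ Δ) : Γ = Δ := by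
  refine h.antisymm fun ψ hψ => by_contra fun hψΓ => ?_
  exact hΔ.neg_mem_iff.mp (h (hΓ.neg_mem_iff.mpr hψΓ)) hψ

end MCSE

end Hilbert

section Semantics

variable {A : Type} [DecidableEq A] (M : GEM A) {U V : Finset A} {w w' : M.W}

namespace GEM

theorem rel_self_left (h : M.rel U w w') : M.rel U w w :=
  M.trans U w w' w h (M.symm U w w' h)

theorem rel_self_right (h : M.rel U w w') : M.rel U w' w' :=
  M.rel_self_left (M.symm U w w' h)

end GEM

theorem sat_and_iff {φ ψ : Fml A} : Sat M w (Fml.and φ ψ) ↔ Sat M w φ ∧ Sat M w ψ := by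
  simp only [Fml.and, Fml.neg, Sat]
  tauto

theorem sat_alive_iff : Sat M w (Fml.alive U) ↔ M.rel U w w :=
  ⟨fun h => by_contra fun hw => h fun _ hw' _ => hw (M.rel_self_left hw'), fun h hD => hD w h id⟩

theorem sat_D_fls_iff : Sat M w (Fml.D U Fml.fls) ↔ ¬ M.rel U w w :=
  ⟨fun h hw => h w hw, fun h _ hw' => h (M.rel_self_left hw')⟩

theorem sat_foldr_and_iff (l : List (Fml A)) :
    Sat M w (l.foldr Fml.and Fml.tru) ↔ ∀ x ∈ l, Sat M w x := by
  induction l with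
  | nil => simp [Fml.tru, Fml.neg, Sat]
  | cons x l ih => simp [sat_and_iff, ih]

theorem sat_deadG_iff : Sat M w (deadG V) ↔ ∀ a ∈ V, ¬ M.rel {a} w w := by
  simp [deadG, sat_foldr_and_iff, sat_D_fls_iff]

end Semantics

def GEM.Proper (M : GEM A) : Prop :=
  ∀ w w' : M.W, liveF M w = liveF M w' → M.rel (liveF M w) w w' → w = w'

theorem liveF_eq_of_sat_deadG_compl {M : GEM A} {U : Finset A} {w : M.W}
    (hU : M.rel U w w) (hdead : Sat M w (deadG Uᶜ)) : liveF M w = U := by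
  ext a
  simp only [liveF, Finset.mem_filter, Finset.mem_univ, true_and]
  refine ⟨fun ha => by_contra fun haU => (sat_deadG_iff M).mp hdead a (by simpa) ha,
    fun ha => M.mono {a} U (by simpa) w w hU⟩

theorem GEM.Proper.sat_axP {M : GEM A} (hM : M.Proper) (w : M.W) (U : Finset A)
    (φ : Fml A) :
    Sat M w (Fml.imp (Fml.and (Fml.alive U) (Fml.and (deadG Uᶜ) φ))
      (Fml.D U (Fml.imp (deadG Uᶜ) φ))) := by
  intro hant w' hww' hdead'
  obtain ⟨halive, hdead, hφ⟩ := by simpa only [sat_and_iff] using hant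
  have hlive : liveF M w = U :=
    liveF_eq_of_sat_deadG_compl ((sat_alive_iff M).mp halive) hdead
  have hlive' : liveF M w' = U :=
    liveF_eq_of_sat_deadG_compl (M.rel_self_right hww') hdead'
  obtain rfl : w = w' := hM w w' (hlive.trans hlive'.symm) (hlive ▸ hww')
  exact hφ

theorem MCSE.deadG_compl_liveC_mem {Ax : Set (Fml A)} {Γ : Set (Fml A)} (hΓ : MCSE Ax Γ) :
    deadG (liveC Γ)ᶜ ∈ Γ := by
  refine hΓ.foldr_and_mem fun x hx => ?_
  obtain ⟨a, ha, rfl⟩ := List.mem_map.mp hx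
  refine hΓ.D_fls_mem_of_not_canRel_self fun hrel => ?_
  simp_all [liveC]

theorem MCSE.subset_of_canRel_of_liveC_eq {Γ Δ : Set (Fml A)} {U : Finset A}
    (hΓ : MCSE AxP Γ) (hΔ : MCSE AxP Δ) (hlΓ : liveC Γ = U) (hlΔ : liveC Δ = U)
    (h : canRel U Γ Δ) : Γ ⊆ Δ := by
  intro φ hφ
  have hdeadΓ : deadG Uᶜ ∈ Γ := hlΓ ▸ hΓ.deadG_compl_liveC_mem
  have hdeadΔ : deadG Uᶜ ∈ Δ := hlΔ ▸ hΔ.deadG_compl_liveC_mem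
  have hant := hΓ.and_mem (hΓ.alive_mem_of_canRel hΔ h) (hΓ.and_mem hdeadΓ hφ)
  have hD := hΓ.mem_of_imp_mem (hΓ.mem_of_prov (ProvE.extra ⟨U, φ, rfl⟩)) hant
  exact hΔ.mem_of_imp_mem (h _ hD) hdeadΔ

/-- Axiom P is valid in every proper generalized epistemic model; conversely,
in the canonical model of EC_n + P, if `live(Γ) = live(Δ) = U` and `Γ ∼_U Δ`,
then `Γ = Δ`. -/
theorem stmt14 :
    (∀ M : GEM A,
      (∀ w w' : M.W, liveF M w = liveF M w' → M.rel (liveF M w) w w' → w = w') →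
      ∀ (w : M.W) (U : Finset A) (φ : Fml A),
        Sat M w (Fml.imp (Fml.and (Fml.alive U) (Fml.and (deadG Uᶜ) φ))
          (Fml.D U (Fml.imp (deadG Uᶜ) φ)))) ∧
    (∀ (Γ Δ : Set (Fml A)) (U : Finset A), MCSE (AxP (A := A)) Γ → MCSE AxP Δ →
      liveC Γ = U → liveC Δ = U → canRel U Γ Δ → Γ = Δ) :=
  ⟨fun _ hM => GEM.Proper.sat_axP hM, fun _ _ _ hΓ hΔ hlΓ hlΔ h =>
    hΓ.eq_of_subset hΔ (hΓ.subset_of_canRel_of_liveC_eq hΔ hlΓ hlΔ h)⟩
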